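/- If I is an atomless ideal on X, then the weak distributivity number of P(X)/I is at most its density number: wh(I) ≤ π(I). -/

import Mathlib

universe u

open Cardinal

/-- An ideal on a set `X` (as in the paper): a family of subsets closed under
subsets of pairwise unions, not containing `X`, and containing all singletons. -/
structure SetIdeal (X : Type u) where
  sets : Set (Set X)
  mem_of_subset_union : ∀ ⦃A₀ A₁ A : Set X⦄,
    A₀ ∈ sets → A₁ ∈ sets → A ⊆ A₀ ∪ A₁ → A ∈ sets
  univ_not_mem : (Set.univ : Set X) ∉ sets
  singleton_mem : ∀ x : X, ({x} : Set X) ∈ sets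

namespace SetIdeal

variable {X : Type u}

/-- `I` is `κ`-complete: closed under unions of fewer than `κ` of its members. -/
def IsComplete (I : SetIdeal X) (κ : Cardinal.{u}) : Prop :=
  ∀ S : Set (Set X), S ⊆ I.sets → #S < κ → ⋃₀ S ∈ I.sets

/-- The additivity number `add(I)`: the least `κ` such that `I` is not `κ`-complete. -/
noncomputable def add (I : SetIdeal X) : Cardinal.{u} :=
  sInf {κ : Cardinal.{u} | ¬ I.IsComplete κ}

/-- `I` is atomless: every `I`-positive set splits into two `I`-positive sets;
equivalently, `P(X)/I` is an atomless Boolean algebra. -/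
def Atomless (I : SetIdeal X) : Prop :=
  ∀ A : Set X, A ∉ I.sets → ∃ B : Set X, B ⊆ A ∧ B ∉ I.sets ∧ A \ B ∉ I.sets

/-- An antichain in `P(X)/I`, given by representatives: a family of `I`-positive
sets, pairwise `I`-disjoint (hence representing pairwise distinct classes). -/
def IsQAntichain (I : SetIdeal X) (𝒜 : Set (Set X)) : Prop :=
  (∀ A ∈ 𝒜, A ∉ I.sets) ∧ 𝒜.Pairwise (fun A B => A ∩ B ∈ I.sets)

/-- A partition (maximal antichain) of `P(X)/I`, given by representatives. -/
def IsQPartition (I : SetIdeal X) (𝒜 : Set (Set X)) : Prop :=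
  I.IsQAntichain 𝒜 ∧ ∀ C : Set X, C ∉ I.sets → ∃ A ∈ 𝒜, A ∩ C ∉ I.sets

/-- `P` refines `Q` (in `P(X)/I`): every member of `P` meets exactly one member of `Q`. -/
def QRefines (I : SetIdeal X) (P Q : Set (Set X)) : Prop :=
  ∀ A ∈ P, ∃! B, B ∈ Q ∧ A ∩ B ∉ I.sets

/-- `P` almost refines `Q`: every member of `P` meets only finitely many members of `Q`. -/
def QAlmostRefines (I : SetIdeal X) (P Q : Set (Set X)) : Prop :=
  ∀ A ∈ P, {B ∈ Q | A ∩ B ∉ I.sets}.Finite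

/-- The saturation number `sat(I)`: the least `κ` such that `P(X)/I` has no
antichain of size `κ`. -/
noncomputable def sat (I : SetIdeal X) : Cardinal.{u} :=
  sInf {κ : Cardinal.{u} | ¬ ∃ 𝒜 : Set (Set X), I.IsQAntichain 𝒜 ∧ #𝒜 = κ}

/-- The density number `π(I)` of `P(X)/I`: the least size of a dense family of
`I`-positive sets. -/
noncomputable def pi (I : SetIdeal X) : Cardinal.{u} :=
  sInf {κ : Cardinal.{u} | ∃ D : Set (Set X),
    (∀ A ∈ D, A ∉ I.sets) ∧
    (∀ C : Set X, C ∉ I.sets → ∃ A ∈ D, A \ C ∈ I.sets) ∧ #D = κ}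

/-- `P(X)/I` is `κ`-distributive: every family of `κ` partitions has a common
refinement which is a partition. -/
def IsQDistrib (I : SetIdeal X) (κ : Cardinal.{u}) : Prop :=
  ∀ (ι : Type u) (P : ι → Set (Set X)), #ι = κ →
    (∀ i, I.IsQPartition (P i)) →
    ∃ R : Set (Set X), I.IsQPartition R ∧ ∀ i, I.QRefines R (P i)

/-- `P(X)/I` is weakly `κ`-distributive: every family of `κ` partitions has a
common almost-refinement which is a partition. -/
def IsQWeakDistrib (I : SetIdeal X) (κ : Cardinal.{u}) : Prop :=
  ∀ (ι : Type u) (P : ι → Set (Set X)), #ι = κ →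
    (∀ i, I.IsQPartition (P i)) →
    ∃ R : Set (Set X), I.IsQPartition R ∧ ∀ i, I.QAlmostRefines R (P i)

/-- The distributivity number `h(I)`. -/
noncomputable def h (I : SetIdeal X) : Cardinal.{u} :=
  sInf {κ : Cardinal.{u} | ¬ I.IsQDistrib κ}

/-- The weak distributivity number `wh(I)`. -/
noncomputable def wh (I : SetIdeal X) : Cardinal.{u} :=
  sInf {κ : Cardinal.{u} | ¬ I.IsQWeakDistrib κ}

end SetIdeal


namespace SetIdealAux

open SetIdeal

variable {X : Type u}

lemma mem_of_subset (I : SetIdeal X) {A B : Set X} (hA : A ∈ I.sets) (h : B ⊆ A) :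
    B ∈ I.sets :=
  I.mem_of_subset_union hA hA (h.trans (by simp))

lemma empty_mem (I : SetIdeal X) (x : X) : (∅ : Set X) ∈ I.sets :=
  mem_of_subset I (I.singleton_mem x) (Set.empty_subset _)

lemma pos_inter (I : SetIdeal X) {A B : Set X} (hA : A ∉ I.sets)
    (h : A \ B ∈ I.sets) : A ∩ B ∉ I.sets := by
  intro hc
  exact hA (I.mem_of_subset_union hc h (fun x hx => by
    by_cases hb : x ∈ B
    · exact Or.inl ⟨hx, hb⟩
    · exact Or.inr ⟨hx, hb⟩))

/-- From an atomless ideal, split a positive set into countably many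
pairwise disjoint positive pieces. -/
lemma exists_seq (I : SetIdeal X) (hI : I.Atomless) {d : Set X} (hd : d ∉ I.sets) :
    ∃ C : ℕ → Set X, (∀ n, C n ⊆ d) ∧ (∀ n, C n ∉ I.sets) ∧
      (∀ m n, m ≠ n → C m ∩ C n = ∅) := by
  have hI' : ∀ A : Set X, ∃ B : Set X,
      A ∉ I.sets → B ⊆ A ∧ B ∉ I.sets ∧ A \ B ∉ I.sets := by
    intro A
    by_cases h : A ∈ I.sets
    · exact ⟨∅, fun h' => absurd h h'⟩
    · obtain ⟨B, h1, h2, h3⟩ := hI A h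
      exact ⟨B, fun _ => ⟨h1, h2, h3⟩⟩
  choose f hf using hI'
  let R : ℕ → Set X := fun n => Nat.rec d (fun _ r => r \ f r) n
  have hR0 : R 0 = d := rfl
  have hRs : ∀ n, R (n + 1) = R n \ f (R n) := fun n => rfl
  have hRpos : ∀ n, R n ∉ I.sets := by
    intro n
    induction n with
    | zero => exact hd
    | succ k ih => rw [hRs]; exact (hf (R k) ih).2.2
  have hanti : ∀ m n, m ≤ n → R n ⊆ R m := by
    intro m n h
    induction n with
    | zero => rw [Nat.le_zero.mp h]
    | succ k ih =>
      rcases Nat.lt_or_ge m (k+1) with h' | h'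
      · exact (by rw [hRs]; exact Set.diff_subset : R (k+1) ⊆ R k).trans
          (ih (Nat.lt_succ_iff.mp h'))
      · rw [Nat.le_antisymm h h']
  refine ⟨fun n => f (R n), fun n => ((hf (R n) (hRpos n)).1).trans (hanti 0 n (Nat.zero_le n)),
    fun n => (hf (R n) (hRpos n)).2.1, ?_⟩
  have key : ∀ m n, m < n → f (R m) ∩ f (R n) = ∅ := by
    intro m n hmn
    apply Set.eq_empty_of_forall_notMem
    rintro x ⟨hx1, hx2⟩
    have : x ∈ R (m + 1) := hanti (m+1) n hmn ((hf (R n) (hRpos n)).1 hx2)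
    rw [hRs] at this
    exact this.2 hx1
  intro m n hmn
  rcases Nat.lt_or_ge m n with h | h
  · exact key m n h
  · rw [Set.inter_comm]
    exact key n m (lt_of_le_of_ne h (Ne.symm hmn))

/-- Every antichain extends to a maximal antichain, i.e. a partition. -/
lemma exists_partition_extending (I : SetIdeal X) (𝒜 : Set (Set X))
    (h𝒜 : I.IsQAntichain 𝒜) : ∃ Pm, I.IsQPartition Pm ∧ 𝒜 ⊆ Pm := by
  set S : Set (Set (Set X)) := {B | I.IsQAntichain B ∧ 𝒜 ⊆ B} with hS
  have hchainub : ∀ c ⊆ S, IsChain (· ⊆ ·) c → c.Nonempty →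
      ∃ ub ∈ S, ∀ s ∈ c, s ⊆ ub := by
    intro c hcS hchain hcne
    refine ⟨⋃₀ c, ⟨⟨?_, ?_⟩, ?_⟩, fun s hs => Set.subset_sUnion_of_mem hs⟩
    · rintro A ⟨t, htc, hAt⟩
      exact (hcS htc).1.1 A hAt
    · rintro A ⟨t, htc, hAt⟩ B ⟨u, huc, hBu⟩ hne
      rcases hchain.total htc huc with h | h
      · exact (hcS huc).1.2 (h hAt) hBu hne
      · exact (hcS htc).1.2 hAt (h hBu) hne
    · obtain ⟨t, htc⟩ := hcne
      exact (hcS htc).2.trans (Set.subset_sUnion_of_mem htc)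
  obtain ⟨m, hm1, hm2⟩ := zorn_subset_nonempty S hchainub 𝒜 ⟨h𝒜, subset_rfl⟩
  · refine ⟨m, ⟨hm2.prop.1, ?_⟩, hm1⟩
    intro C hC
    by_contra hcon
    push_neg at hcon
    have hCm : C ∉ m := by
      intro h
      exact hC (mem_of_subset I (hcon C h) (by intro x hx; exact ⟨hx, hx⟩))
    have hmem : m ∪ {C} ∈ S := by
      refine ⟨⟨?_, ?_⟩, hm2.prop.2.trans Set.subset_union_left⟩
      · rintro A (hA | hA)
        · exact hm2.prop.1.1 A hA
        · rw [Set.mem_singleton_iff] at hA; rw [hA]; exact hC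
      · rintro A (hA | hA) B (hB | hB) hne
        · exact hm2.prop.1.2 hA hB hne
        · rw [Set.mem_singleton_iff] at hB; rw [hB]; exact hcon A hA
        · rw [Set.mem_singleton_iff] at hA; rw [hA, Set.inter_comm]
          exact hcon B hB
        · rw [Set.mem_singleton_iff] at hA hB
          exact absurd (hA.trans hB.symm) hne
    have := hm2.eq_of_subset hmem Set.subset_union_left
    exact hCm (this ▸ Set.mem_union_right _ rfl)

end SetIdealAux


/-- If `I` is an atomless ideal on `X`, then the weak
distributivity number of `P(X)/I` is at most its density number:
`wh(I) ≤ π(I)`. -/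
theorem stmt9 {X : Type u} (I : SetIdeal X) (hI : I.Atomless) :
    I.wh ≤ I.pi := by
  by_cases hX : Nonempty X
  · obtain ⟨x⟩ := hX
    have hempty : (∅ : Set X) ∈ I.sets := SetIdealAux.empty_mem I x
    -- the defining set of `pi` is nonempty, so its infimum is attained
    have hne : {κ : Cardinal.{u} | ∃ D : Set (Set X),
        (∀ A ∈ D, A ∉ I.sets) ∧
        (∀ C : Set X, C ∉ I.sets → ∃ A ∈ D, A \ C ∈ I.sets) ∧ #D = κ}.Nonempty := by
      refine ⟨#{A : Set X | A ∉ I.sets}, {A : Set X | A ∉ I.sets}, fun A hA => hA,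
        fun C hC => ⟨C, hC, by simpa using hempty⟩, rfl⟩
    obtain ⟨D, hDpos, hDdense, hDcard⟩ := csInf_mem hne
    have hnot : ¬ I.IsQWeakDistrib I.pi := by
      intro hw
      choose C hC1 hC2 hC3 using fun d : ↥D => SetIdealAux.exists_seq I hI (hDpos d d.2)
      have hanti : ∀ d : ↥D, I.IsQAntichain (Set.range (C d)) := by
        intro d
        constructor
        · rintro A ⟨n, rfl⟩
          exact hC2 d n
        · rintro A ⟨n, rfl⟩ B ⟨m, rfl⟩ hne'
          have hnm : n ≠ m := fun h => hne' (by rw [h])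
          rw [hC3 d n m hnm]
          exact hempty
      choose P hP hP2 using fun d : ↥D =>
        SetIdealAux.exists_partition_extending I (Set.range (C d)) (hanti d)
      obtain ⟨R, hRpart, hRref⟩ := hw (↥D) P hDcard hP
      obtain ⟨A, hAR, hApos⟩ := hRpart.2 Set.univ I.univ_not_mem
      rw [Set.inter_univ] at hApos
      obtain ⟨d, hdD, hdA⟩ := hDdense A hApos
      have hfin := hRref ⟨d, hdD⟩ A hAR
      refine (Set.infinite_of_injective_forall_mem
        (f := fun n => C ⟨d, hdD⟩ n) ?_ ?_) hfin
      · intro n m hnm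
        by_contra hne'
        have h0 := hC3 ⟨d, hdD⟩ n m hne'
        have hnm' : C ⟨d, hdD⟩ n = C ⟨d, hdD⟩ m := hnm
        rw [hnm', Set.inter_self] at h0
        exact hC2 ⟨d, hdD⟩ m (h0 ▸ hempty)
      · intro n
        refine ⟨hP2 ⟨d, hdD⟩ ⟨n, rfl⟩, ?_⟩
        rw [Set.inter_comm]
        exact SetIdealAux.pos_inter I (hC2 ⟨d, hdD⟩ n)
          (SetIdealAux.mem_of_subset I hdA
            (Set.diff_subset_diff_left (hC1 ⟨d, hdD⟩ n)))
    exact csInf_le' hnot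
  · -- `X` is empty: every cardinal is weakly distributive, so `wh I = 0`
    have hno : ∀ A : Set X, A ∉ I.sets := by
      intro A hA
      have : A = Set.univ := by
        ext y
        exact absurd ⟨y⟩ hX
      rw [this] at hA
      exact I.univ_not_mem hA
    have hall : ∀ κ, I.IsQWeakDistrib κ := by
      intro κ ι P hcard hPpart
      refine ⟨{∅}, ⟨⟨fun A _ => hno A, Set.pairwise_singleton _ _⟩,
        fun Cc hC => ⟨∅, rfl, hno _⟩⟩, ?_⟩
      intro i A hA
      refine Set.Finite.subset (Set.finite_singleton ∅) ?_
      intro B hB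
      have : B = ∅ := by
        ext y
        exact absurd ⟨y⟩ hX
      simp [this]
    have hEmpty : {κ : Cardinal.{u} | ¬ I.IsQWeakDistrib κ} = ∅ :=
      Set.eq_empty_of_forall_notMem fun κ hκ => hκ (hall κ)
    unfold SetIdeal.wh
    rw [hEmpty, Cardinal.sInf_empty]
    exact zero_le
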